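/- arXiv:2601.16696 — 5 statements merged into one kernel-verified Lean document; each statement's English description precedes it below -/
import Mathlib

section
/- Let (X, dist) be a metric space and let ρ, ρ', p, p_ε ∈ X with 0 < c < 1. Assume the contraction bound dist(ρ', p_ε) ≤ (1 − c) · dist(ρ, p_ε) and the strict asymptotic-bias condition dist(p, p_ε) < (c / (2 − c)) · dist(ρ, p). Then dist(ρ', p) < dist(ρ, p), i.e. one kernel step strictly decreases the distance to the target. -/
/-- Sufficient condition for a strictly convergent chain: if the kernel contracts
toward its biased stationary point `pε` with constant `c ∈ (0,1)` and the
asymptotic bias satisfies `dist p pε < (c / (2 - c)) * dist ρ p`, then one kernel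
step strictly decreases the distance to the target `p`. -/
theorem one_step_strict_decrease {X : Type*} [MetricSpace X] (ρ ρ' p pε : X) (c : ℝ)
    (hc0 : 0 < c) (hc1 : c < 1)
    (hcontr : dist ρ' pε ≤ (1 - c) * dist ρ pε)
    (hbias : dist p pε < (c / (2 - c)) * dist ρ p) :
    dist ρ' p < dist ρ p := by
  have h2c : (0:ℝ) < 2 - c := by linarith
  have hbias' : (2 - c) * dist p pε < c * dist ρ p := by
    rw [div_mul_eq_mul_div, lt_div_iff₀ h2c] at hbias; nlinarith
  have t1 : dist ρ' p ≤ dist ρ' pε + dist pε p := dist_triangle _ _ _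
  have t2 : dist ρ pε ≤ dist ρ p + dist p pε := dist_triangle _ _ _
  have e : dist pε p = dist p pε := dist_comm _ _
  nlinarith
end

section
/- Theorem 1 (one-step contraction under the optimal step size schedule). Let (X, dist) be a metric space, let ρ, ρ', p, p_ε ∈ X, and let 0 < c < 1, κ > 0, c_asym > 0, ε > 0. Assume (A1) dist(p, p_ε) ≤ c_asym · ε^κ, (A2) dist(ρ', p_ε) ≤ (1 − c) · dist(ρ, p_ε), and that the step size satisfies the schedule equation c_asym · ε^κ = (c / ((2 − c)(κ + 1))) · dist(ρ, p). Then dist(ρ', p) ≤ (1 − c·κ/(κ + 1)) · dist(ρ, p), and the contraction factor satisfies 0 < 1 − c·κ/(κ + 1) < 1. -/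
/-- Theorem 1 of the paper: one-step contraction under the optimal step size
schedule.  Assumptions: (A1) the asymptotic bias is bounded by `casym * ε ^ κ`,
(A2) the kernel contracts toward its biased stationary point `pε` with constant
`c ∈ (0,1)`, and the step size `ε` satisfies the schedule equation
`casym * ε ^ κ = (c / ((2 - c) * (κ + 1))) * dist ρ p`.  Conclusion:
`dist ρ' p ≤ (1 - c * κ / (κ + 1)) * dist ρ p`, and the contraction factor
lies strictly between `0` and `1`. -/
theorem one_step_contraction_schedule {X : Type*} [MetricSpace X]
    (ρ ρ' p pε : X) (c κ casym ε : ℝ)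
    (hc0 : 0 < c) (hc1 : c < 1) (hκ : 0 < κ) (hca : 0 < casym) (hε : 0 < ε)
    (hA1 : dist p pε ≤ casym * ε ^ κ)
    (hA2 : dist ρ' pε ≤ (1 - c) * dist ρ pε)
    (hsched : casym * ε ^ κ = (c / ((2 - c) * (κ + 1))) * dist ρ p) :
    dist ρ' p ≤ (1 - c * κ / (κ + 1)) * dist ρ p ∧
      0 < 1 - c * κ / (κ + 1) ∧ 1 - c * κ / (κ + 1) < 1 := by
  have hκ1 : (0:ℝ) < κ + 1 := by linarith
  have h2c : (0:ℝ) < 2 - c := by linarith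
  have hden : (0:ℝ) < (2 - c) * (κ + 1) := by positivity
  have hB : casym * ε ^ κ = c / ((2 - c) * (κ + 1)) * dist ρ p := hsched
  have h1 : dist ρ' p ≤ dist ρ' pε + dist pε p := dist_triangle _ _ _
  have h2 : dist ρ pε ≤ dist ρ p + dist p pε := dist_triangle _ _ _
  have hpε : dist pε p = dist p pε := dist_comm _ _
  refine ⟨?_, ?_, ?_⟩
  · have key : dist ρ' p ≤ (1 - c) * dist ρ p + (2 - c) * (casym * ε ^ κ) := by
      nlinarith [dist_nonneg (x := ρ) (y := pε)]
    rw [hB] at key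
    have : (1 - c) * dist ρ p + (2 - c) * (c / ((2 - c) * (κ + 1)) * dist ρ p)
        = (1 - c * κ / (κ + 1)) * dist ρ p := by
      field_simp
      ring
    linarith [this ▸ key]
  · have : c * κ / (κ + 1) < 1 := by
      rw [div_lt_one hκ1]; nlinarith
    linarith
  · have : 0 < c * κ / (κ + 1) := by positivity
    linarith
end

section
/- Geometric convergence under the schedule (iterated Theorem 1). Let (X, dist) be a metric space, p ∈ X, and let 0 < c < 1, κ > 0, c_asym > 0. Let ρ : ℕ → X be a sequence and ε : ℕ → ℝ with ε_t > 0 for all t, and suppose for every t ∈ ℕ there exists a point p_{ε_t} ∈ X such that (A1) dist(p, p_{ε_t}) ≤ c_asym · ε_t^κ, (A2) dist(ρ_{t+1}, p_{ε_t}) ≤ (1 − c) · dist(ρ_t, p_{ε_t}), and c_asym · ε_t^κ = (c / ((2 − c)(κ + 1))) · dist(ρ_t, p). Then for all t ∈ ℕ, dist(ρ_t, p) ≤ (1 − c·κ/(κ + 1))^t · dist(ρ_0, p); in particular dist(ρ_t, p) → 0 as t → ∞ and the chain converges to the target. -/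
/-- Geometric convergence under the optimal step size schedule (iterated
Theorem 1).  If at every iteration `t` the kernel's biased stationary point
`pε` satisfies the asymptotic-bias bound (A1), the contraction bound (A2), and
the step size `ε t` satisfies the schedule equation, then the chain converges
geometrically to the target `p`. -/
theorem geometric_convergence_schedule {X : Type*} [MetricSpace X]
    (p : X) (c κ casym : ℝ)
    (hc0 : 0 < c) (hc1 : c < 1) (hκ : 0 < κ) (hca : 0 < casym)
    (ρ : ℕ → X) (ε : ℕ → ℝ) (hε : ∀ t, 0 < ε t)
    (h : ∀ t : ℕ, ∃ pε : X,
      dist p pε ≤ casym * ε t ^ κ ∧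
      dist (ρ (t + 1)) pε ≤ (1 - c) * dist (ρ t) pε ∧
      casym * ε t ^ κ = (c / ((2 - c) * (κ + 1))) * dist (ρ t) p) :
    (∀ t : ℕ, dist (ρ t) p ≤ (1 - c * κ / (κ + 1)) ^ t * dist (ρ 0) p) ∧
      Filter.Tendsto (fun t => dist (ρ t) p) Filter.atTop (nhds 0) := by
  have hκ1 : (0:ℝ) < κ + 1 := by linarith
  have hc2 : (0:ℝ) < 2 - c := by linarith
  set r : ℝ := 1 - c * κ / (κ + 1) with hrdef
  have hr0 : 0 < r := by
    have : c * κ / (κ + 1) < 1 := by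
      rw [div_lt_one hκ1]; nlinarith
    simp only [hrdef]; linarith
  have hr1 : r < 1 := by
    have : 0 < c * κ / (κ + 1) := by positivity
    simp only [hrdef]; linarith
  have step : ∀ t, dist (ρ (t + 1)) p ≤ r * dist (ρ t) p := by
    intro t
    obtain ⟨pε, h1, h2, h3⟩ := h t
    set d := dist (ρ t) p with hd
    set b := casym * ε t ^ κ with hbdef
    have hb2 : (2 - c) * b = c / (κ + 1) * d := by
      rw [h3]; field_simp
    have htri1 : dist (ρ t) pε ≤ d + b :=
      le_trans (dist_triangle _ p pε) (by linarith)
    have htri2 : dist (ρ (t + 1)) p ≤ dist (ρ (t + 1)) pε + b := by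
      calc dist (ρ (t + 1)) p ≤ dist (ρ (t + 1)) pε + dist pε p := dist_triangle _ _ _
        _ ≤ dist (ρ (t + 1)) pε + b := by rw [dist_comm pε p]; linarith
    have h4 : dist (ρ (t + 1)) p ≤ (1 - c) * d + (2 - c) * b := by
      have := mul_le_mul_of_nonneg_left htri1 (by linarith : (0:ℝ) ≤ 1 - c)
      linarith
    have hr : (1 - c) * d + c / (κ + 1) * d = r * d := by
      simp only [hrdef]; field_simp; ring
    rw [hb2] at h4
    clear_value r d b
    linarith
  have bound : ∀ t : ℕ, dist (ρ t) p ≤ r ^ t * dist (ρ 0) p := by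
    intro t
    induction t with
    | zero => simp
    | succ n ih =>
      calc dist (ρ (n + 1)) p ≤ r * dist (ρ n) p := step n
        _ ≤ r * (r ^ n * dist (ρ 0) p) := by
            exact mul_le_mul_of_nonneg_left ih hr0.le
        _ = r ^ (n + 1) * dist (ρ 0) p := by ring
  refine ⟨bound, ?_⟩
  have hlim : Filter.Tendsto (fun t : ℕ => r ^ t * dist (ρ 0) p) Filter.atTop (nhds 0) := by
    have := (tendsto_pow_atTop_nhds_zero_of_lt_one hr0.le hr1).mul_const (dist (ρ 0) p)
    simpa using this
  exact squeeze_zero (fun t => dist_nonneg) bound hlim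
end

section
/- The microcanonical velocity update preserves unit norm. Let d ≥ 1, let u and e be vectors in ℝ^d with ‖u‖ = ‖e‖ = 1, and let δ ∈ ℝ. Set a = ⟨e, u⟩ and define u' = ( u + ( sinh(δ) + a·(cosh(δ) − 1) )·e ) / ( cosh(δ) + a·sinh(δ) ). Then ‖u'‖ = 1. -/
open scoped RealInnerProductSpace

/-- The microcanonical velocity update preserves unit norm.  For unit vectors
`u` (velocity) and `e` (gradient direction) in `ℝ^d`, with `a = ⟪e, u⟫`, the
updated velocity
`u' = (u + (sinh δ + a (cosh δ - 1)) • e) / (cosh δ + a sinh δ)`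
is again a unit vector. -/
theorem velocity_update_unit_norm (d : ℕ) (hd : 1 ≤ d)
    (u e : EuclideanSpace ℝ (Fin d)) (hu : ‖u‖ = 1) (he : ‖e‖ = 1) (δ : ℝ) :
    ‖(Real.cosh δ + ⟪e, u⟫ * Real.sinh δ)⁻¹ •
        (u + (Real.sinh δ + ⟪e, u⟫ * (Real.cosh δ - 1)) • e)‖ = 1 := by
  set a : ℝ := ⟪e, u⟫ with ha
  have habs : |a| ≤ 1 := by
    calc |a| ≤ ‖e‖ * ‖u‖ := abs_real_inner_le_norm e u
    _ = 1 := by rw [hu, he]; ring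
  have hs : |Real.sinh δ| < Real.cosh δ := by
    rw [abs_lt]
    constructor
    · nlinarith [Real.cosh_sq δ, Real.cosh_pos δ]
    · nlinarith [Real.cosh_sq δ, Real.cosh_pos δ]
  have hD : 0 < Real.cosh δ + a * Real.sinh δ := by
    have : |a * Real.sinh δ| ≤ |Real.sinh δ| := by
      rw [abs_mul]
      calc |a| * |Real.sinh δ| ≤ 1 * |Real.sinh δ| :=
        mul_le_mul_of_nonneg_right habs (abs_nonneg _)
      _ = |Real.sinh δ| := one_mul _
    have := abs_le.mp this
    linarith
  set c : ℝ := Real.sinh δ + a * (Real.cosh δ - 1) with hc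
  have hue : ⟪u, e⟫ = a := by rw [ha, real_inner_comm]
  have hnorm2 : ‖u + c • e‖ ^ 2 = (Real.cosh δ + a * Real.sinh δ) ^ 2 := by
    rw [norm_add_sq_real, real_inner_smul_right, norm_smul, hue, hu, he]
    have h1 : Real.cosh δ ^ 2 - Real.sinh δ ^ 2 = 1 := Real.cosh_sq_sub_sinh_sq δ
    rw [Real.norm_eq_abs]
    rw [hc, mul_one, sq_abs]
    linear_combination (a ^ 2 - 1) * h1
  have hnorm : ‖u + c • e‖ = Real.cosh δ + a * Real.sinh δ := by
    nlinarith [norm_nonneg (u + c • e), sq_nonneg (‖u + c • e‖ + (Real.cosh δ + a * Real.sinh δ)), sq_nonneg (‖u + c • e‖ - (Real.cosh δ + a * Real.sinh δ))]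
  rw [norm_smul, hnorm, Real.norm_eq_abs, abs_inv, abs_of_pos hD]
  field_simp
end

section
/- Reduction of the microcanonical velocity ODE to a linear second-order ODE. Let d ≥ 1, let g ∈ ℝ^d be a fixed vector, and let y : ℝ → ℝ^d be twice differentiable with y''(t) = ⟨g, y(t)⟩ · g for all t. Suppose ⟨g, y(t)⟩ ≠ 0 for all t in an open interval I, and define u : I → ℝ^d by u(t) = y'(t) / ⟨g, y(t)⟩. Then for all t ∈ I, u'(t) = g − ⟨g, u(t)⟩ · u(t), i.e., u solves the Riccati vector equation u' = (I − u uᵀ) g. -/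
open scoped RealInnerProductSpace

/-- In the quotient rule for `c⁻¹ • v`, the term `c⁻¹ • v'` collapses to `w`. -/
theorem HasDerivAt.inv_smul_of_hasDerivAt_smul {𝕜 E : Type*} [NontriviallyNormedField 𝕜]
    [NormedAddCommGroup E] [NormedSpace 𝕜 E] {c : 𝕜 → 𝕜} {v : 𝕜 → E} {c' : 𝕜} {w : E} {t : 𝕜}
    (hc : HasDerivAt c c' t) (hv : HasDerivAt v (c t • w) t) (hct : c t ≠ 0) :
    HasDerivAt (fun s => (c s)⁻¹ • v s) (w - (c' / c t) • ((c t)⁻¹ • v t)) t := by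
  refine ((hc.inv hct).smul hv).congr_deriv ?_
  rw [Pi.inv_apply, smul_smul, inv_mul_cancel₀ hct, one_smul, smul_smul, sub_eq_add_neg, ← neg_smul]
  congr 2
  field_simp

theorem riccati_substitution_general (d : ℕ)
    (g : EuclideanSpace ℝ (Fin d)) (y dy : ℝ → EuclideanSpace ℝ (Fin d))
    (hy : ∀ t, HasDerivAt y (dy t) t)
    (hdy : ∀ t, HasDerivAt dy (⟪g, y t⟫ • g) t)
    (a b : ℝ)
    (hne : ∀ t ∈ Set.Ioo a b, ⟪g, y t⟫ ≠ 0) :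
    ∀ t ∈ Set.Ioo a b,
      HasDerivAt (fun s => (⟪g, y s⟫)⁻¹ • dy s)
        (g - ⟪g, (⟪g, y t⟫)⁻¹ • dy t⟫ • ((⟪g, y t⟫)⁻¹ • dy t)) t := by
  intro t ht
  have hgy : HasDerivAt (fun s => ⟪g, y s⟫) ⟪g, dy t⟫ t := by
    simpa using (hasDerivAt_const t g).inner ℝ (hy t)
  have hu := hgy.inv_smul_of_hasDerivAt_smul (hdy t) (hne t ht)
  rwa [inner_smul_right, inv_mul_eq_div]

/-- Reduction of the microcanonical velocity ODE to a linear second-order ODE.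
If `y : ℝ → ℝ^d` is twice differentiable with `y'' t = ⟪g, y t⟫ • g`
(the linear ODE `ÿ = (g gᵀ) y`), and `⟪g, y t⟫ ≠ 0` on an open interval
`I = (a, b)`, then `u t = (⟪g, y t⟫)⁻¹ • y' t` solves the Riccati vector
equation `u' = g - ⟪g, u⟫ • u` on `I`. -/
theorem riccati_substitution (d : ℕ) (hd : 1 ≤ d)
    (g : EuclideanSpace ℝ (Fin d)) (y dy : ℝ → EuclideanSpace ℝ (Fin d))
    (hy : ∀ t, HasDerivAt y (dy t) t)
    (hdy : ∀ t, HasDerivAt dy (⟪g, y t⟫ • g) t)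
    (a b : ℝ)
    (hne : ∀ t ∈ Set.Ioo a b, ⟪g, y t⟫ ≠ 0) :
    ∀ t ∈ Set.Ioo a b,
      HasDerivAt (fun s => (⟪g, y s⟫)⁻¹ • dy s)
        (g - ⟪g, (⟪g, y t⟫)⁻¹ • dy t⟫ • ((⟪g, y t⟫)⁻¹ • dy t)) t :=
  riccati_substitution_general d g y dy hy hdy a b hne
end
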